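/- arXiv:2507.08640 — 10 statements merged into one kernel-verified Lean document; each statement's English description precedes it below -/
import Mathlib

section
/- Let n be a natural number and for each j : Fin n let ι j be a nonempty finite index type. For each j, let A_j, B_j : Matrix (ι j) (ι j) ℝ be symmetric matrices (Aᵀ = A, Bᵀ = B) such that A_j is positive semidefinite (for all x : ι j → ℝ, x ⬝ᵥ A_j.mulVec x ≥ 0) and for all x, y : ι j → ℝ one has |x ⬝ᵥ B_j.mulVec y| ≤ (1/2) * (x ⬝ᵥ A_j.mulVec x + y ⬝ᵥ A_j.mulVec y). Define the product (tensor) matrices A, B : Matrix (Π j, ι j) (Π j, ι j) ℝ by A u v = ∏ j, A_j (u j) (v j) and B u v = ∏ j, B_j (u j) (v j). Then A and B are symmetric, A is positive semidefinite, and for all x, y : (Π j, ι j) → ℝ one has |x ⬝ᵥ B.mulVec y| ≤ (1/2) * (x ⬝ᵥ A.mulVec x + y ⬝ᵥ A.mulVec y). -/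
/-!
The bound `|⟪x, B y⟫| ≤ (⟪x, A x⟫ + ⟪y, A y⟫) / 2` for symmetric `A`, `B` says exactly that the
block matrix `[[A, B], [B, A]]` is positive semidefinite: evaluate its quadratic form at `(x, y)`
and `(x, -y)`. Tensor products of positive semidefinite matrices are positive semidefinite, since
`⊗ (Cᵢᴴ Cᵢ) = (⊗ Cᵢ)ᴴ (⊗ Cᵢ)`, and the principal submatrix of `⊗ [[Aⱼ, Bⱼ], [Bⱼ, Aⱼ]]` on the
indices that are "all first block" or "all second block" is `[[⊗ Aⱼ, ⊗ Bⱼ], [⊗ Bⱼ, ⊗ Aⱼ]]`. Positivity of `⊗ Aⱼ` is then the case `x = y` of the bound.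
-/

open Matrix

open scoped ComplexOrder

namespace Matrix

section piKronecker

variable {ι : Type*} [Fintype ι] {l m n : ι → Type*} {R : Type*}

def piKronecker [CommMonoid R] (M : ∀ i, Matrix (m i) (n i) R) :
    Matrix (∀ i, m i) (∀ i, n i) R :=
  of fun u v => ∏ i, M i (u i) (v i)

@[simp]
lemma piKronecker_apply [CommMonoid R] (M : ∀ i, Matrix (m i) (n i) R) (u : ∀ i, m i)
    (v : ∀ i, n i) : piKronecker M u v = ∏ i, M i (u i) (v i) :=
  rfl

lemma transpose_piKronecker [CommMonoid R] (M : ∀ i, Matrix (m i) (n i) R) :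
    (piKronecker M)ᵀ = piKronecker fun i => (M i)ᵀ :=
  rfl

lemma IsSymm.piKronecker [CommMonoid R] {M : ∀ i, Matrix (m i) (m i) R}
    (hM : ∀ i, (M i).IsSymm) : (piKronecker M).IsSymm := by
  rw [IsSymm, transpose_piKronecker]
  exact congrArg _ (funext hM)

lemma conjTranspose_piKronecker [CommSemiring R] [StarRing R] (M : ∀ i, Matrix (m i) (n i) R) :
    (piKronecker M)ᴴ = piKronecker fun i => (M i)ᴴ := by
  ext u v
  simp [star_prod]

lemma piKronecker_mul [CommSemiring R] [DecidableEq ι] [∀ i, Fintype (m i)]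
    (M : ∀ i, Matrix (l i) (m i) R) (N : ∀ i, Matrix (m i) (n i) R) :
    piKronecker M * piKronecker N = piKronecker fun i => M i * N i := by
  ext u w
  simp only [mul_apply, piKronecker_apply, Fintype.prod_sum, ← Finset.prod_mul_distrib]

lemma PosSemidef.piKronecker {𝕜 : Type*} [RCLike 𝕜] [∀ i, Fintype (m i)]
    {M : ∀ i, Matrix (m i) (m i) 𝕜} (hM : ∀ i, (M i).PosSemidef) :
    (piKronecker M).PosSemidef := by
  classical
  open scoped MatrixOrder in
  choose C hC using fun i => CStarAlgebra.nonneg_iff_eq_star_mul_self.mp (hM i).nonneg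
  have hfactor : Matrix.piKronecker M = (Matrix.piKronecker C)ᴴ * Matrix.piKronecker C := by
    rw [conjTranspose_piKronecker, piKronecker_mul]
    exact congrArg _ (funext hC)
  rw [hfactor]
  exact posSemidef_conjTranspose_mul_self _

lemma piKronecker_fromBlocks_submatrix [CommMonoid R] (A B C D : ∀ i, Matrix (m i) (n i) R) :
    (piKronecker fun i => fromBlocks (A i) (B i) (C i) (D i)).submatrix
        (Sum.elim (fun u i => .inl (u i)) (fun u i => .inr (u i)))
        (Sum.elim (fun v i => .inl (v i)) (fun v i => .inr (v i))) =
      fromBlocks (piKronecker A) (piKronecker B) (piKronecker C) (piKronecker D) := by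
  ext (u | u) (v | v) <;> rfl

lemma PosSemidef.fromBlocks_piKronecker {𝕜 : Type*} [RCLike 𝕜] [∀ i, Fintype (m i)]
    {A B : ∀ i, Matrix (m i) (m i) 𝕜} (h : ∀ i, (fromBlocks (A i) (B i) (B i) (A i)).PosSemidef) :
    (fromBlocks (Matrix.piKronecker A) (Matrix.piKronecker B) (Matrix.piKronecker B)
      (Matrix.piKronecker A)).PosSemidef := by
  rw [← piKronecker_fromBlocks_submatrix]
  exact (PosSemidef.piKronecker h).submatrix _

end piKronecker

section fromBlocks

variable {m : Type*} [Fintype m]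

lemma sumElim_dotProduct_fromBlocks_mulVec {R : Type*} [CommSemiring R] (A B : Matrix m m R)
    (x y : m → R) :
    Sum.elim x y ⬝ᵥ fromBlocks A B B A *ᵥ Sum.elim x y =
      x ⬝ᵥ A *ᵥ x + y ⬝ᵥ A *ᵥ y + (x ⬝ᵥ B *ᵥ y + y ⬝ᵥ B *ᵥ x) := by
  rw [fromBlocks_mulVec, Sum.elim_comp_inl, Sum.elim_comp_inr, sumElim_dotProduct_sumElim,
    dotProduct_add, dotProduct_add]
  ring

lemma posSemidef_fromBlocks_iff {A B : Matrix m m ℝ} (hA : A.IsSymm) (hB : B.IsSymm) :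
    (fromBlocks A B B A).PosSemidef ↔
      ∀ x y : m → ℝ, |x ⬝ᵥ B *ᵥ y| ≤ 1 / 2 * (x ⬝ᵥ A *ᵥ x + y ⬝ᵥ A *ᵥ y) := by
  have hBxy (x y : m → ℝ) : y ⬝ᵥ B *ᵥ x = x ⬝ᵥ B *ᵥ y := by
    rw [dotProduct_mulVec, ← mulVec_transpose, hB.eq, dotProduct_comm]
  simp only [posSemidef_iff_dotProduct_mulVec, star_trivial]
  constructor
  · rintro ⟨-, hquad⟩ x y
    have hplus := hquad (Sum.elim x y)
    have hminus := hquad (Sum.elim x (-y))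
    simp only [sumElim_dotProduct_fromBlocks_mulVec, mulVec_neg, dotProduct_neg, neg_dotProduct,
      neg_neg, hBxy x] at hplus hminus
    rw [abs_le]
    constructor <;> linarith
  · intro hdom
    refine ⟨?_, fun z => ?_⟩
    · rw [IsHermitian, conjTranspose_eq_transpose_of_trivial, fromBlocks_transpose, hA.eq, hB.eq]
    · rw [← Sum.elim_comp_inl_inr z, sumElim_dotProduct_fromBlocks_mulVec,
        hBxy (z ∘ Sum.inl)]
      linarith [hdom (z ∘ Sum.inl) (z ∘ Sum.inr),
        neg_abs_le ((z ∘ Sum.inl) ⬝ᵥ B *ᵥ (z ∘ Sum.inr))]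

end fromBlocks

end Matrix

theorem tensor_quadratic_form_bound_real_general
    (n : ℕ) (ι : Fin n → Type*) [∀ j, Fintype (ι j)]
    (A B : ∀ j, Matrix (ι j) (ι j) ℝ)
    (hAsymm : ∀ j, (A j)ᵀ = A j) (hBsymm : ∀ j, (B j)ᵀ = B j)
    (hdom : ∀ j, ∀ x y : ι j → ℝ,
      |x ⬝ᵥ (B j).mulVec y| ≤ (1/2) * (x ⬝ᵥ (A j).mulVec x + y ⬝ᵥ (A j).mulVec y)) :
    let 𝒜 : Matrix (∀ j, ι j) (∀ j, ι j) ℝ := fun u v => ∏ j, A j (u j) (v j)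
    let ℬ : Matrix (∀ j, ι j) (∀ j, ι j) ℝ := fun u v => ∏ j, B j (u j) (v j)
    𝒜ᵀ = 𝒜 ∧ ℬᵀ = ℬ ∧ (∀ x : (∀ j, ι j) → ℝ, x ⬝ᵥ 𝒜.mulVec x ≥ 0) ∧
      (∀ x y : (∀ j, ι j) → ℝ,
        |x ⬝ᵥ ℬ.mulVec y| ≤ (1/2) * (x ⬝ᵥ 𝒜.mulVec x + y ⬝ᵥ 𝒜.mulVec y)) := by
  intro 𝒜 ℬ
  have h𝒜 : 𝒜.IsSymm := IsSymm.piKronecker hAsymm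
  have hℬ : ℬ.IsSymm := IsSymm.piKronecker hBsymm
  have hblocks : ∀ j, (fromBlocks (A j) (B j) (B j) (A j)).PosSemidef := fun j =>
    (posSemidef_fromBlocks_iff (hAsymm j) (hBsymm j)).2 (hdom j)
  have hbound : ∀ x y : (∀ j, ι j) → ℝ,
      |x ⬝ᵥ ℬ *ᵥ y| ≤ 1 / 2 * (x ⬝ᵥ 𝒜 *ᵥ x + y ⬝ᵥ 𝒜 *ᵥ y) :=
    (posSemidef_fromBlocks_iff h𝒜 hℬ).1 (PosSemidef.fromBlocks_piKronecker hblocks)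
  exact ⟨h𝒜, hℬ, fun x => by linarith [hbound x x, abs_nonneg (x ⬝ᵥ ℬ *ᵥ x)], hbound⟩

theorem tensor_quadratic_form_bound_real
    (n : ℕ) (ι : Fin n → Type*) [∀ j, Fintype (ι j)] [∀ j, Nonempty (ι j)]
    (A B : ∀ j, Matrix (ι j) (ι j) ℝ)
    (hAsymm : ∀ j, (A j)ᵀ = A j) (hBsymm : ∀ j, (B j)ᵀ = B j)
    (hApsd : ∀ j, ∀ x : ι j → ℝ, x ⬝ᵥ (A j).mulVec x ≥ 0)
    (hdom : ∀ j, ∀ x y : ι j → ℝ,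
      |x ⬝ᵥ (B j).mulVec y| ≤ (1/2) * (x ⬝ᵥ (A j).mulVec x + y ⬝ᵥ (A j).mulVec y)) :
    let 𝒜 : Matrix (∀ j, ι j) (∀ j, ι j) ℝ := fun u v => ∏ j, A j (u j) (v j)
    let ℬ : Matrix (∀ j, ι j) (∀ j, ι j) ℝ := fun u v => ∏ j, B j (u j) (v j)
    𝒜ᵀ = 𝒜 ∧ ℬᵀ = ℬ ∧ (∀ x : (∀ j, ι j) → ℝ, x ⬝ᵥ 𝒜.mulVec x ≥ 0) ∧
      (∀ x y : (∀ j, ι j) → ℝ,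
        |x ⬝ᵥ ℬ.mulVec y| ≤ (1/2) * (x ⬝ᵥ 𝒜.mulVec x + y ⬝ᵥ 𝒜.mulVec y)) :=
  tensor_quadratic_form_bound_real_general n ι A B hAsymm hBsymm hdom
end

section
/- Let ι be a nonempty finite type and let A, B, C : Matrix ι ι ℝ with A and B symmetric (Aᵀ = A, Bᵀ = B), C symmetric and invertible, and C * C = A. Then the following are equivalent: (i) for all x, y : ι → ℝ, |x ⬝ᵥ B.mulVec y| ≤ (1/2) * (x ⬝ᵥ A.mulVec x + y ⬝ᵥ A.mulVec y); (ii) every real eigenvalue λ of the symmetric matrix C⁻¹ * B * C⁻¹ (equivalently, every element λ of the real spectrum of C⁻¹ * B * C⁻¹) satisfies |λ| ≤ 1. -/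
/-!
Substituting `u = C x`, `v = C y` turns `x ⬝ B y` into `u ⬝ D v` with `D = C⁻¹ B C⁻¹` and
`x ⬝ A x` into `u ⬝ u`, so the form bound is `|u ⬝ D v| ≤ (u ⬝ u + v ⬝ v) / 2` for all `u, v`.
By polarization this is equivalent to `|u ⬝ D u| ≤ u ⬝ u`, i.e. to `1 - D` and `1 + D` being
positive semidefinite, which for the symmetric matrix `D` means that its spectrum lies in `[-1, 1]`.
-/

open Matrix

namespace Matrix

section Symm

variable {ι : Type*} [Fintype ι]

theorem dotProduct_transpose_mul_mul_mulVec {R : Type*} [CommSemiring R] (M N : Matrix ι ι R)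
    (x y : ι → R) : x ⬝ᵥ (Mᵀ * N * M) *ᵥ y = (M *ᵥ x) ⬝ᵥ N *ᵥ (M *ᵥ y) := by
  rw [← mulVec_mulVec, ← mulVec_mulVec, dotProduct_mulVec, vecMul_transpose]

theorem IsSymm.dotProduct_mulVec_comm {R : Type*} [CommSemiring R] {D : Matrix ι ι R}
    (hD : D.IsSymm) (x y : ι → R) : x ⬝ᵥ D *ᵥ y = y ⬝ᵥ D *ᵥ x := by
  rw [dotProduct_mulVec, ← mulVec_transpose, hD.eq, dotProduct_comm]

theorem IsSymm.abs_dotProduct_mulVec_le_iff {𝕜 : Type*} [Field 𝕜] [LinearOrder 𝕜]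
    [IsStrictOrderedRing 𝕜] {D : Matrix ι ι 𝕜} (hD : D.IsSymm) :
    (∀ x y : ι → 𝕜, |x ⬝ᵥ D *ᵥ y| ≤ (1 / 2) * (x ⬝ᵥ x + y ⬝ᵥ y)) ↔
      ∀ x : ι → 𝕜, |x ⬝ᵥ D *ᵥ x| ≤ x ⬝ᵥ x := by
  refine ⟨fun h x => by simpa [← two_mul] using h x x, fun h x y => ?_⟩
  have polarization :
      4 * (x ⬝ᵥ D *ᵥ y) = (x + y) ⬝ᵥ D *ᵥ (x + y) - (x - y) ⬝ᵥ D *ᵥ (x - y) := by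
    simp only [mulVec_add, mulVec_sub, dotProduct_add, dotProduct_sub, add_dotProduct,
      sub_dotProduct, hD.dotProduct_mulVec_comm y x]
    ring
  have parallelogram :
      (x + y) ⬝ᵥ (x + y) + (x - y) ⬝ᵥ (x - y) = 2 * (x ⬝ᵥ x + y ⬝ᵥ y) := by
    simp only [dotProduct_add, dotProduct_sub, add_dotProduct, sub_dotProduct,
      dotProduct_comm y x]
    ring
  have h4 : |4 * (x ⬝ᵥ D *ᵥ y)| ≤ 2 * (x ⬝ᵥ x + y ⬝ᵥ y) :=
    polarization ▸ parallelogram ▸ (abs_sub _ _).trans (add_le_add (h _) (h _))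
  rw [abs_mul, abs_of_pos four_pos] at h4
  linarith

end Symm

section Hermitian

variable {ι : Type*} [Fintype ι] [DecidableEq ι] {D : Matrix ι ι ℝ}

theorem IsHermitian.dotProduct_mulVec_self_le_iff (hD : D.IsHermitian) (c : ℝ) :
    (∀ x : ι → ℝ, x ⬝ᵥ D *ᵥ x ≤ c * (x ⬝ᵥ x)) ↔ ∀ μ ∈ spectrum ℝ D, μ ≤ c := by
  have hcD : (algebraMap ℝ (Matrix ι ι ℝ) c - D).IsHermitian :=
    ((IsSelfAdjoint.all c).algebraMap _).sub hD
  calc (∀ x : ι → ℝ, x ⬝ᵥ D *ᵥ x ≤ c * (x ⬝ᵥ x))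
      ↔ (algebraMap ℝ (Matrix ι ι ℝ) c - D).PosSemidef := by
        rw [posSemidef_iff_dotProduct_mulVec, and_iff_right hcD]
        simp only [star_trivial, sub_mulVec, Algebra.algebraMap_eq_smul_one, smul_mulVec,
          one_mulVec, dotProduct_sub, dotProduct_smul, smul_eq_mul, sub_nonneg]
    _ ↔ ∀ μ ∈ spectrum ℝ D, μ ≤ c := by
        rw [posSemidef_iff_isHermitian_and_spectrum_nonneg, and_iff_right hcD,
          ← spectrum.singleton_sub_eq]
        simp [Set.subset_def]

theorem IsHermitian.abs_dotProduct_mulVec_self_le_iff (hD : D.IsHermitian) (c : ℝ) :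
    (∀ x : ι → ℝ, |x ⬝ᵥ D *ᵥ x| ≤ c * (x ⬝ᵥ x)) ↔ ∀ μ ∈ spectrum ℝ D, |μ| ≤ c := by
  calc (∀ x : ι → ℝ, |x ⬝ᵥ D *ᵥ x| ≤ c * (x ⬝ᵥ x))
      ↔ (∀ x : ι → ℝ, x ⬝ᵥ D *ᵥ x ≤ c * (x ⬝ᵥ x)) ∧
          ∀ x : ι → ℝ, x ⬝ᵥ (-D) *ᵥ x ≤ c * (x ⬝ᵥ x) := by
        simp only [abs_le, neg_mulVec, dotProduct_neg, neg_le, forall_and, and_comm]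
    _ ↔ (∀ μ ∈ spectrum ℝ D, μ ≤ c) ∧ ∀ μ ∈ spectrum ℝ (-D), μ ≤ c := by
        rw [hD.dotProduct_mulVec_self_le_iff, hD.neg.dotProduct_mulVec_self_le_iff]
    _ ↔ ∀ μ ∈ spectrum ℝ D, |μ| ≤ c := by
        simp only [← spectrum.neg_eq, Set.mem_neg, Set.forall_neg_mem, neg_le, abs_le, and_comm,
          forall₂_and]

end Hermitian

end Matrix

theorem form_bound_iff_eigenvalues_le_one_general {ι : Type*} [Fintype ι] [DecidableEq ι]
    (A B C : Matrix ι ι ℝ) (hB : Bᵀ = B) (hC : Cᵀ = C)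
    (hCinv : IsUnit C.det) (hCC : C * C = A) :
    (∀ x y : ι → ℝ,
        |x ⬝ᵥ B.mulVec y| ≤ (1/2) * (x ⬝ᵥ A.mulVec x + y ⬝ᵥ A.mulVec y)) ↔
      (∀ μ ∈ spectrum ℝ (C⁻¹ * B * C⁻¹), |μ| ≤ 1) := by
  set D := C⁻¹ * B * C⁻¹
  have hD : D.IsSymm := by
    simp only [D, IsSymm, transpose_mul, transpose_nonsing_inv, hB, hC, mul_assoc]
  have hA : A = Cᵀ * 1 * C := by rw [hC, mul_one, hCC]
  have hBD : B = Cᵀ * D * C := by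
    simp only [D, hC, ← mul_assoc, mul_nonsing_inv _ hCinv, one_mul,
      nonsing_inv_mul_cancel_right _ _ hCinv]
  have hCsurj : Function.Surjective C.mulVec :=
    mulVec_surjective_iff_isUnit.2 ((isUnit_iff_isUnit_det C).2 hCinv)
  rw [hA, hBD]
  simp only [dotProduct_transpose_mul_mul_mulVec, one_mulVec]
  rw [← hCsurj.forall₂ (p := fun u v => |u ⬝ᵥ D *ᵥ v| ≤ 1 / 2 * (u ⬝ᵥ u + v ⬝ᵥ v)),
    hD.abs_dotProduct_mulVec_le_iff]
  simpa using (isHermitian_iff_isSymm.2 hD).abs_dotProduct_mulVec_self_le_iff 1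

theorem form_bound_iff_eigenvalues_le_one {ι : Type*} [Fintype ι] [Nonempty ι] [DecidableEq ι]
    (A B C : Matrix ι ι ℝ) (hA : Aᵀ = A) (hB : Bᵀ = B) (hC : Cᵀ = C)
    (hCinv : IsUnit C.det) (hCC : C * C = A) :
    (∀ x y : ι → ℝ,
        |x ⬝ᵥ B.mulVec y| ≤ (1/2) * (x ⬝ᵥ A.mulVec x + y ⬝ᵥ A.mulVec y)) ↔
      (∀ μ ∈ spectrum ℝ (C⁻¹ * B * C⁻¹), |μ| ≤ 1) :=
  form_bound_iff_eigenvalues_le_one_general A B C hB hC hCinv hCC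
end

section
/- Let ι and κ be nonempty finite types and let A : Matrix ι ι ℝ and B : Matrix κ κ ℝ be symmetric matrices (Aᵀ = A, Bᵀ = B). Then the real spectrum of the Kronecker product A ⊗ₖ B equals the set of all products λ * μ where λ lies in the real spectrum of A and μ lies in the real spectrum of B. -/
/-!
Diagonalize `A = U D Uᴴ` and `B = V E Vᴴ` by the spectral theorem. Then `U ⊗ₖ V` is unitary and
`A ⊗ₖ B = (U ⊗ₖ V) (D ⊗ₖ E) (U ⊗ₖ V)ᴴ`, where `D ⊗ₖ E` is diagonal with the entries `λᵢ μⱼ`; since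
unitary conjugation preserves the spectrum, that of `A ⊗ₖ B` is the set of these products.
-/

open Kronecker

namespace Matrix

variable {𝕜 ι κ : Type*} [RCLike 𝕜] [Fintype ι] [Fintype κ] [DecidableEq ι] [DecidableEq κ]
  {A : Matrix ι ι 𝕜} {B : Matrix κ κ 𝕜}

theorem spectrum_real_diagonal_ofReal (d : ι → ℝ) :
    spectrum ℝ (diagonal (RCLike.ofReal ∘ d : ι → 𝕜)) = Set.range d := by
  ext x
  rw [← spectrum.algebraMap_mem_iff 𝕜, spectrum_diagonal]
  simp

namespace IsHermitian

theorem kronecker_eq_conj_diagonal (hA : A.IsHermitian) (hB : B.IsHermitian) :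
    A ⊗ₖ B = ((hA.eigenvectorUnitary : Matrix ι ι 𝕜) ⊗ₖ (hB.eigenvectorUnitary : Matrix κ κ 𝕜)) *
      diagonal (RCLike.ofReal ∘ fun p : ι × κ => hA.eigenvalues p.1 * hB.eigenvalues p.2) *
      star ((hA.eigenvectorUnitary : Matrix ι ι 𝕜) ⊗ₖ (hB.eigenvectorUnitary : Matrix κ κ 𝕜)) := by
  conv_lhs => rw [hA.spectral_theorem, hB.spectral_theorem]
  simp only [Unitary.conjStarAlgAut_apply, mul_kronecker_mul, diagonal_kronecker_diagonal,
    star_eq_conjTranspose, conjTranspose_kronecker]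
  congr
  ext p
  simp

theorem spectrum_real_kronecker (hA : A.IsHermitian) (hB : B.IsHermitian) :
    spectrum ℝ (A ⊗ₖ B) = Set.image2 (· * ·) (spectrum ℝ A) (spectrum ℝ B) := by
  have hW : (hA.eigenvectorUnitary : Matrix ι ι 𝕜) ⊗ₖ (hB.eigenvectorUnitary : Matrix κ κ 𝕜) ∈
      unitary (Matrix (ι × κ) (ι × κ) 𝕜) :=
    kronecker_mem_unitary hA.eigenvectorUnitary.2 hB.eigenvectorUnitary.2
  rw [kronecker_eq_conj_diagonal hA hB, Unitary.spectrum_star_right_conjugate (U := ⟨_, hW⟩),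
    spectrum_real_diagonal_ofReal, hA.spectrum_real_eq_range_eigenvalues,
    hB.spectrum_real_eq_range_eigenvalues, Set.image2_range]

end IsHermitian

end Matrix

open Matrix Kronecker in
theorem kronecker_spectrum_general {ι κ : Type*} [Fintype ι] [Fintype κ]
    [DecidableEq ι] [DecidableEq κ]
    (A : Matrix ι ι ℝ) (B : Matrix κ κ ℝ) (hA : Aᵀ = A) (hB : Bᵀ = B) :
    spectrum ℝ (A ⊗ₖ B) =
      {x : ℝ | ∃ l ∈ spectrum ℝ A, ∃ m ∈ spectrum ℝ B, x = l * m} := by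
  rw [(isHermitian_iff_isSymm.mpr hA).spectrum_real_kronecker (isHermitian_iff_isSymm.mpr hB)]
  ext x
  simp only [Set.mem_image2, Set.mem_ofPred_eq, eq_comm]

open Matrix Kronecker in
theorem kronecker_spectrum {ι κ : Type*} [Fintype ι] [Fintype κ]
    [Nonempty ι] [Nonempty κ] [DecidableEq ι] [DecidableEq κ]
    (A : Matrix ι ι ℝ) (B : Matrix κ κ ℝ) (hA : Aᵀ = A) (hB : Bᵀ = B) :
    spectrum ℝ (A ⊗ₖ B) =
      {x : ℝ | ∃ l ∈ spectrum ℝ A, ∃ m ∈ spectrum ℝ B, x = l * m} :=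
  kronecker_spectrum_general A B hA hB
end

section
/- Let t, r be natural numbers and let f : Fin t → ℕ satisfy ∑ i, f i = 2 * r. Then the multinomial coefficient (2r)! / ∏ i, (f i)! equals the sum, over all functions c : Fin t → ℕ with c i ≤ f i for every i and ∑ i, c i = r, of the product of multinomial coefficients (r! / ∏ i, (c i)!) * (r! / ∏ i, (f i − c i)!). In Lean terms: Nat.multinomial Finset.univ f = ∑ over such c of Nat.multinomial Finset.univ c * Nat.multinomial Finset.univ (fun i => f i − c i). -/
/-! Both sides are the coefficient of `X ^ f` in
`(∑ i, X i) ^ (2 * r) = (∑ i, X i) ^ r * (∑ i, X i) ^ r`: on the left by the multinomial theorem,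
on the right after expanding the product of the two coefficients over the antidiagonal
`c + (f - c) = f`. -/

open Finset

theorem Finsupp.sum_antidiagonal_eq_sum_piFinset {σ M : Type*} [Fintype σ] [DecidableEq σ]
    [AddCommMonoid M] (f : σ →₀ ℕ) (g : (σ → ℕ) → (σ → ℕ) → M) :
    ∑ p ∈ antidiagonal f, g p.1 p.2 =
      ∑ c ∈ Fintype.piFinset fun i => range (f i + 1), g c fun i => f i - c i := by
  refine sum_nbij' (fun p => ⇑p.1)
    (fun c => (equivFunOnFinite.symm c, f - equivFunOnFinite.symm c)) ?_ ?_ ?_ ?_ ?_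
  · rintro ⟨c, d⟩ h
    simp only [HasAntidiagonal.mem_antidiagonal] at h
    simp [← h]
  · intro c hc
    simp only [Fintype.mem_piFinset, mem_range, Nat.lt_succ_iff] at hc
    simp only [HasAntidiagonal.mem_antidiagonal]
    exact add_tsub_cancel_of_le hc
  · rintro ⟨c, d⟩ h
    simp only [HasAntidiagonal.mem_antidiagonal] at h
    simp [← h]
  · intro c _
    rfl
  · rintro ⟨c, d⟩ h
    simp only [HasAntidiagonal.mem_antidiagonal] at h
    simp [← h]

theorem MvPolynomial.coeff_sum_X_pow_eq_ite {σ R : Type*} [CommSemiring R] [Fintype σ]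
    (d : σ →₀ ℕ) (n : ℕ) :
    coeff d ((∑ i, X i : MvPolynomial σ R) ^ n) =
      if ∑ i, d i = n then (Nat.multinomial univ d : R) else 0 := by
  rw [coeff_sum_X_pow_of_fintype, Finsupp.sum_fintype _ _ fun _ => rfl,
    Finsupp.multinomial_eq_of_support_subset (subset_univ _), Nat.cast_ite, Nat.cast_zero]

theorem Nat.multinomial_eq_sum_multinomial_mul_multinomial {σ : Type*} [Fintype σ]
    [DecidableEq σ] (f : σ → ℕ) {a b : ℕ} (hf : ∑ i, f i = a + b) :
    Nat.multinomial univ f =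
      ∑ c ∈ (Fintype.piFinset fun i => range (f i + 1)) with ∑ i, c i = a,
        Nat.multinomial univ c * Nat.multinomial univ fun i => f i - c i := by
  obtain ⟨F, rfl⟩ : ∃ F : σ →₀ ℕ, ⇑F = f := ⟨Finsupp.equivFunOnFinite.symm f, rfl⟩
  let P : MvPolynomial σ ℕ := ∑ i, MvPolynomial.X i
  have hcoeff : ∀ p ∈ antidiagonal F, (P ^ a).coeff p.1 * (P ^ b).coeff p.2 =
      if ∑ i, p.1 i = a then Nat.multinomial univ p.1 * Nat.multinomial univ p.2 else 0 := by
    rintro ⟨c, d⟩ h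
    -- once `c` has degree `a`, `d = F - c` automatically has degree `b`
    have hcd : ∑ i, c i + ∑ i, d i = a + b := by
      rw [← hf, ← sum_add_distrib, ← HasAntidiagonal.mem_antidiagonal.mp h]; rfl
    simp only [P, MvPolynomial.coeff_sum_X_pow_eq_ite, Nat.cast_id]
    split_ifs <;> simp_all
  calc Nat.multinomial univ F = (P ^ (a + b)).coeff F := by
        rw [MvPolynomial.coeff_sum_X_pow_eq_ite, if_pos hf, Nat.cast_id]
    _ = ∑ p ∈ antidiagonal F, (P ^ a).coeff p.1 * (P ^ b).coeff p.2 := by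
        rw [pow_add, MvPolynomial.coeff_mul]
    _ = _ := by
        rw [sum_congr rfl hcoeff, Finsupp.sum_antidiagonal_eq_sum_piFinset F
          fun c d => if ∑ i, c i = a then Nat.multinomial univ c * Nat.multinomial univ d else 0,
          sum_filter]

theorem multinomial_vandermonde (t r : ℕ) (f : Fin t → ℕ) (hf : ∑ i, f i = 2 * r) :
    Nat.multinomial Finset.univ f =
      ∑ c ∈ (Fintype.piFinset fun i => Finset.range (f i + 1)).filter
          (fun c => ∑ i, c i = r),
        Nat.multinomial Finset.univ c *
          Nat.multinomial Finset.univ (fun i => f i - c i) :=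
  Nat.multinomial_eq_sum_multinomial_mul_multinomial f (hf.trans (two_mul r))
end

section
/- Let t, r be natural numbers and let x : Fin t → ℝ be a function with x i ≥ 0 for all i. Then ∑ over all c : Fin t → ℕ with ∑ i, c i = r of (Nat.multinomial Finset.univ (fun i => 2 * c i) : ℝ) * ∏ i, (x i) ^ (c i) is at most ((2*r)! / (2 ^ r * r!)) * (∑ i, x i) ^ r. Equivalently, 2 ^ r * r! * ∑_{c : ∑ c i = r} ((2r)! / ∏ i, (2 * c i)!) * ∏ i, (x i)^(c i) ≤ (2r)! * (∑ i, x i) ^ r. -/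
/-! Expand `(∑ i, x i) ^ r` by the multinomial theorem and compare term by term: as
`2 ^ k * k! ≤ (2 * k)!` for each part `k = c i`, the coefficient `(2r)! / ∏ (2 c i)!` is at most
`(2r)! / (2 ^ r * r!)` times `r! / ∏ (c i)!`. -/

open Finset Nat

lemma Finset.filter_piFinset_range_sum_eq_piAntidiag {ι : Type*} [Fintype ι] [DecidableEq ι]
    (r : ℕ) :
    (Fintype.piFinset fun _ : ι => range (r + 1)).filter (fun c => ∑ i, c i = r) =
      piAntidiag univ r := by
  ext c
  simp only [mem_filter, Fintype.mem_piFinset, mem_range, mem_piAntidiag, mem_univ,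
    implies_true, and_true, and_iff_right_iff_imp]
  rintro rfl i
  exact Nat.lt_succ_of_le (single_le_sum (fun _ _ => Nat.zero_le _) (mem_univ i))

namespace Nat

variable {ι : Type*} (s : Finset ι) (f : ι → ℕ)

lemma two_pow_sum_mul_prod_factorial_le_prod_factorial_two_mul :
    2 ^ (∑ i ∈ s, f i) * ∏ i ∈ s, (f i)! ≤ ∏ i ∈ s, (2 * f i)! := by
  rw [← prod_pow_eq_pow_sum, ← prod_mul_distrib]
  exact prod_le_prod' fun i _ => two_pow_mul_factorial_le_factorial_two_mul (f i)

lemma multinomial_two_mul_mul_le :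
    multinomial s (fun i => 2 * f i) * (2 ^ (∑ i ∈ s, f i) * (∑ i ∈ s, f i)!) ≤
      (2 * ∑ i ∈ s, f i)! * multinomial s f := by
  have spec_two_mul := multinomial_spec s (fun i => 2 * f i)
  rw [← mul_sum] at spec_two_mul
  calc multinomial s (fun i => 2 * f i) * (2 ^ (∑ i ∈ s, f i) * (∑ i ∈ s, f i)!)
      = (2 ^ (∑ i ∈ s, f i) * ∏ i ∈ s, (f i)!) * multinomial s f *
          multinomial s (fun i => 2 * f i) := by
        rw [← multinomial_spec s f]; ring
    _ ≤ (∏ i ∈ s, (2 * f i)!) * multinomial s f * multinomial s (fun i => 2 * f i) := by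
        gcongr
        exact two_pow_sum_mul_prod_factorial_le_prod_factorial_two_mul s f
    _ = (2 * ∑ i ∈ s, f i)! * multinomial s f := by
        rw [mul_right_comm, spec_two_mul]

lemma cast_multinomial_two_mul_le :
    (multinomial s (fun i => 2 * f i) : ℝ) ≤
      (2 * ∑ i ∈ s, f i)! / (2 ^ (∑ i ∈ s, f i) * (∑ i ∈ s, f i)! : ℝ) * multinomial s f := by
  rw [div_mul_eq_mul_div, le_div_iff₀ (by positivity)]
  exact_mod_cast multinomial_two_mul_mul_le s f

end Nat

theorem multinomial_double_sum_bound (t r : ℕ) (x : Fin t → ℝ) (hx : ∀ i, x i ≥ 0) :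
    ∑ c ∈ (Fintype.piFinset fun _ : Fin t => Finset.range (r + 1)).filter
        (fun c => ∑ i, c i = r),
      (Nat.multinomial Finset.univ (fun i => 2 * c i) : ℝ) * ∏ i, (x i) ^ (c i)
    ≤ ((2 * r).factorial : ℝ) / (2 ^ r * (r.factorial : ℝ)) * (∑ i, x i) ^ r := by
  rw [filter_piFinset_range_sum_eq_piAntidiag, sum_pow_eq_sum_piAntidiag, mul_sum]
  refine sum_le_sum fun c hc => ?_
  obtain ⟨rfl, -⟩ := mem_piAntidiag.1 hc
  rw [← mul_assoc]
  have hprod : 0 ≤ ∏ i, x i ^ c i := prod_nonneg fun i _ => pow_nonneg (hx i) _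
  exact mul_le_mul_of_nonneg_right (cast_multinomial_two_mul_le univ c) hprod
end

section
/- Let P ≥ 0 and ρ > 0 be real numbers and K a natural number. Then |∑_{r=0}^{K} (−P)^r / r! − exp(−P)| ≤ exp(−ρ * K) * exp(exp(ρ) * P). -/
/-!
The error is the tail `∑_{m > K} (-P)^m / m!`, bounded in absolute value by the tail
`∑_{m > K} P^m / m!` of `exp P`. Rankin's trick: for `m ≥ K` one has `1 ≤ e^{ρ(m-K)}`, so
weighting every term by `e^{ρ(m-K)}` and completing the series gives `e^{-ρK} exp(e^ρ P)`.
-/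

open Finset Nat

namespace Real

theorem exp_sub_sum_range_eq_tsum (x : ℝ) (n : ℕ) :
    exp x - ∑ m ∈ range n, x ^ m / m ! = ∑' m, x ^ (m + n) / (m + n)! := by
  have hexp : exp x = ∑' m, x ^ m / m ! := by rw [exp_eq_exp_ℝ, NormedSpace.exp_eq_tsum_div]
  rw [hexp, ← (summable_pow_div_factorial x).sum_add_tsum_nat_add n, add_sub_cancel_left]

theorem abs_exp_sub_sum_range_le (x : ℝ) (n : ℕ) :
    |exp x - ∑ m ∈ range n, x ^ m / m !| ≤ exp |x| - ∑ m ∈ range n, |x| ^ m / m ! := by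
  have hsummable : Summable fun m ↦ |x| ^ (m + n) / (m + n)! :=
    (summable_nat_add_iff n).2 (summable_pow_div_factorial |x|)
  rw [exp_sub_sum_range_eq_tsum, exp_sub_sum_range_eq_tsum, ← norm_eq_abs]
  refine (norm_tsum_le_tsum_norm ?_).trans_eq (tsum_congr fun m ↦ ?_)
  · simpa only [norm_div, norm_pow, norm_eq_abs, abs_abs, Nat.abs_cast] using hsummable
  · rw [norm_div, norm_pow, norm_eq_abs, norm_natCast]

theorem exp_sub_sum_range_le_div_pow {c y : ℝ} (hc : 1 ≤ c) (hy : 0 ≤ y) (n : ℕ) :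
    exp y - ∑ m ∈ range n, y ^ m / m ! ≤ exp (c * y) / c ^ n := by
  have hc₀ : 0 < c ^ n := pow_pos (zero_lt_one.trans_le hc) n
  have hterm (m : ℕ) : y ^ (m + n) / (m + n)! ≤ (c * y) ^ (m + n) / (m + n)! / c ^ n := by
    rw [le_div_iff₀ hc₀, div_mul_eq_mul_div, mul_pow, pow_add c, mul_comm (y ^ (m + n))]
    gcongr
    exact le_mul_of_one_le_left (pow_nonneg (zero_le_one.trans hc) n) (one_le_pow₀ hc)
  have hsum_nonneg : 0 ≤ ∑ m ∈ range n, (c * y) ^ m / m ! :=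
    sum_nonneg fun m _ ↦ by positivity
  calc exp y - ∑ m ∈ range n, y ^ m / m !
      ≤ (exp (c * y) - ∑ m ∈ range n, (c * y) ^ m / m !) / c ^ n := by
        rw [exp_sub_sum_range_eq_tsum, exp_sub_sum_range_eq_tsum, ← tsum_div_const]
        exact Summable.tsum_le_tsum hterm
          ((summable_nat_add_iff n).2 (summable_pow_div_factorial y))
          (((summable_nat_add_iff n).2 (summable_pow_div_factorial (c * y))).div_const _)
    _ ≤ exp (c * y) / c ^ n := by gcongr; linarith

end Real

theorem exp_truncation_error (P ρ : ℝ) (hP : 0 ≤ P) (hρ : 0 < ρ) (K : ℕ) :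
    |∑ r ∈ Finset.range (K + 1), (-P) ^ r / (Nat.factorial r : ℝ) - Real.exp (-P)| ≤
      Real.exp (-ρ * K) * Real.exp (Real.exp ρ * P) := by
  have hc : 1 ≤ Real.exp ρ := Real.one_le_exp hρ.le
  calc |∑ r ∈ range (K + 1), (-P) ^ r / (r ! : ℝ) - Real.exp (-P)|
      ≤ Real.exp P - ∑ r ∈ range (K + 1), P ^ r / r ! := by
        simpa only [abs_sub_comm, abs_neg, abs_of_nonneg hP]
          using Real.abs_exp_sub_sum_range_le (-P) (K + 1)
    _ ≤ Real.exp (Real.exp ρ * P) / Real.exp ρ ^ (K + 1) :=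
        Real.exp_sub_sum_range_le_div_pow hc hP (K + 1)
    _ ≤ Real.exp (Real.exp ρ * P) / Real.exp ρ ^ K := by
        gcongr
        exact K.le_succ
    _ = Real.exp (-ρ * K) * Real.exp (Real.exp ρ * P) := by
        rw [← Real.exp_nat_mul, div_eq_mul_inv, ← Real.exp_neg, mul_comm, neg_mul, mul_comm ρ]
end

section
/- Let ρ > 0, M ≥ 0 and P be real numbers with 0 ≤ P ≤ M, and let K be a natural number. Then ∑_{r=0}^{K} (−P)^r / r! ≥ exp(−P) * (1 − exp((exp(ρ) + 1) * M − ρ * K)). -/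
/-!
The truncation error is the tail `∑_{r > K} (-P)^r / r!`, bounded in absolute value by the
tail of `exp P`. A Chernoff-type weighting of the `r`-th term by `exp (ρ (r - K)) ≥ 1` bounds
that tail by `exp (-ρ K) * exp (P exp ρ)`, and `P exp ρ ≤ (exp ρ + 1) M - P` finishes.
-/

open Finset Real Nat

theorem Real.hasSum_pow_div_factorial (x : ℝ) : HasSum (fun m ↦ x ^ m / m !) (exp x) := by
  rw [exp_eq_exp_ℝ]
  exact NormedSpace.expSeries_div_hasSum_exp x

theorem Real.abs_exp_sub_sum_le_exp_abs_sub_sum (x : ℝ) (n : ℕ) :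
    |exp x - ∑ m ∈ range n, x ^ m / m !| ≤ exp |x| - ∑ m ∈ range n, |x| ^ m / m ! := by
  have := Complex.norm_exp_sub_sum_le_exp_norm_sub_sum x n
  rw [← Complex.ofReal_exp] at this
  exact_mod_cast this

theorem Real.exp_sub_sum_range_le_exp_mul_sub (x ρ : ℝ) (hx : 0 ≤ x) (hρ : 0 ≤ ρ) {K n : ℕ}
    (hKn : K ≤ n) :
    exp x - ∑ m ∈ range n, x ^ m / m ! ≤ exp (exp ρ * x - ρ * K) := by
  set c := exp (-(ρ * K))
  have hterm (m : ℕ) (hm : K ≤ m) : x ^ m / m ! ≤ c * (x * exp ρ) ^ m / m ! := by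
    have hweight : 1 ≤ c * exp ρ ^ m := by
      rw [← exp_nat_mul, ← exp_add, one_le_exp_iff]
      have : (K : ℝ) ≤ m := by exact_mod_cast hm
      nlinarith
    rw [mul_pow, ← mul_assoc, mul_comm c, mul_assoc]
    gcongr
    exact le_mul_of_one_le_right (by positivity) hweight
  have hg := (hasSum_pow_div_factorial (x * exp ρ)).mul_left c
  simp only [← mul_div_assoc] at hg
  calc exp x - ∑ m ∈ range n, x ^ m / m !
      ≤ c * exp (x * exp ρ) - ∑ m ∈ range n, c * (x * exp ρ) ^ m / m ! :=
        hasSum_le (fun m ↦ hterm _ (hKn.trans le_add_self))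
          ((hasSum_nat_add_iff' n).2 (hasSum_pow_div_factorial x))
          ((hasSum_nat_add_iff' n).2 hg)
    _ ≤ c * exp (x * exp ρ) := sub_le_self _ (sum_nonneg fun m _ ↦ by positivity)
    _ = exp (exp ρ * x - ρ * K) := by rw [← exp_add]; ring_nf

theorem exp_truncation_lower_bound_general (ρ M P : ℝ) (hρ : 0 < ρ)
    (hP0 : 0 ≤ P) (hPM : P ≤ M) (K : ℕ) :
    ∑ r ∈ Finset.range (K + 1), (-P) ^ r / (Nat.factorial r : ℝ) ≥
      Real.exp (-P) * (1 - Real.exp ((Real.exp ρ + 1) * M - ρ * K)) := by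
  have htail := abs_exp_sub_sum_le_exp_abs_sub_sum (-P) (K + 1)
  rw [abs_neg, abs_of_nonneg hP0] at htail
  have hchernoff := exp_sub_sum_range_le_exp_mul_sub P ρ hP0 hρ.le K.le_succ
  have hexponent : exp (exp ρ * P - ρ * K) ≤ exp (-P) * exp ((exp ρ + 1) * M - ρ * K) := by
    rw [← exp_add, exp_le_exp]
    nlinarith [exp_pos ρ]
  linarith [(abs_le.1 htail).2]

theorem exp_truncation_lower_bound (ρ M P : ℝ) (hρ : 0 < ρ) (hM : 0 ≤ M)
    (hP0 : 0 ≤ P) (hPM : P ≤ M) (K : ℕ) :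
    ∑ r ∈ Finset.range (K + 1), (-P) ^ r / (Nat.factorial r : ℝ) ≥
      Real.exp (-P) * (1 - Real.exp ((Real.exp ρ + 1) * M - ρ * K)) :=
  exp_truncation_lower_bound_general ρ M P hρ hP0 hPM K
end

section
/- Let a, b > 0 be real numbers and V ∈ ℝ. Then the sum over all integers u ∈ ℤ of exp(−u²/(2a) − (V − u)²/(2b)) converges and satisfies ∑_{u ∈ ℤ} exp(−u²/(2a) − (V − u)²/(2b)) ≤ (1 + Real.sqrt (2 * π * a * b / (a + b))) * exp(−V²/(2*(a + b))). -/
/-!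
Completing the square writes each term as `exp (-V ^ 2 / (2 * (a + b)))` times the Gaussian
`exp (-c * (u - μ) ^ 2)` with `c = (a + b) / (2 * a * b)` and `μ = a * V / (a + b)`, so it suffices
to bound integer sums of a unimodal integrable function `f ≥ 0` with peak `μ` by `f μ + ∫ f`.
After translating the peak into `[0, 1]`, every `f n` with `n ≤ -1` is at most `∫ x in n..n+1, f x`
and every `f n` with `n ≥ 2` at most `∫ x in n-1..n, f x`; the two terms straddling the peak
satisfy `f 0 + f 1 ≤ f t + ∫ x in 0..1, f x`, because `f ≥ f 0` on `[0, t]` and `f ≥ f 1` on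
`[t, 1]` while `(1 - t) * f 0 + t * f 1 ≤ f t`.
-/

open MeasureTheory Set intervalIntegral

section Unimodal

variable {f : ℝ → ℝ}

lemma add_le_apply_add_intervalIntegral_of_unimodal {t : ℝ} (ht : t ∈ Icc (0 : ℝ) 1)
    (hmono : MonotoneOn f (Icc 0 t)) (hanti : AntitoneOn f (Icc t 1))
    (hf : IntervalIntegrable f volume 0 1) :
    f 0 + f 1 ≤ f t + ∫ x in (0 : ℝ)..1, f x := by
  obtain ⟨ht0, ht1⟩ := ht
  have hf0 : IntervalIntegrable f volume 0 t :=
    hf.mono_set (uIcc_subset_uIcc left_mem_uIcc (by simp [uIcc_of_le, ht0, ht1]))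
  have hf1 : IntervalIntegrable f volume t 1 :=
    hf.mono_set (uIcc_subset_uIcc (by simp [uIcc_of_le, ht0, ht1]) right_mem_uIcc)
  have hleft : t * f 0 ≤ ∫ x in (0 : ℝ)..t, f x := by
    simpa using integral_mono_on ht0 intervalIntegrable_const hf0
      fun x hx => hmono ⟨le_rfl, ht0⟩ hx hx.1
  have hright : (1 - t) * f 1 ≤ ∫ x in t..1, f x := by
    simpa using integral_mono_on ht1 intervalIntegrable_const hf1
      fun x hx => hanti hx ⟨ht1, le_rfl⟩ hx.2
  have h0 : f 0 ≤ f t := hmono ⟨le_rfl, ht0⟩ ⟨ht0, le_rfl⟩ ht0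
  have h1 : f 1 ≤ f t := hanti ⟨le_rfl, ht1⟩ ⟨ht1, le_rfl⟩ ht1
  rw [← integral_add_adjacent_intervals hf0 hf1]
  nlinarith [mul_nonneg (sub_nonneg.2 ht1) (sub_nonneg.2 h0), mul_nonneg ht0 (sub_nonneg.2 h1)]

theorem summable_and_tsum_int_le_of_unimodal_of_mem_Icc {t : ℝ} (ht : t ∈ Icc (0 : ℝ) 1)
    (hmono : MonotoneOn f (Iic t)) (hanti : AntitoneOn f (Ici t))
    (hnonneg : ∀ x, 0 ≤ f x) (hf : Integrable f) :
    Summable (fun n : ℤ => f n) ∧ ∑' n : ℤ, f n ≤ f t + ∫ x, f x := by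
  have hanti_pos : AntitoneOn f (Ici ((1 : ℕ) : ℝ)) :=
    hanti.mono (Ici_subset_Ici.2 (by simpa using ht.2))
  have hanti_neg : AntitoneOn (fun x => f (-x)) (Ici 0) := fun x hx y hy hxy =>
    hmono (by rw [mem_Ici] at hy; rw [mem_Iic]; linarith [ht.1])
      (by rw [mem_Ici] at hx; rw [mem_Iic]; linarith [ht.1]) (neg_le_neg hxy)
  have hsum_pos : Summable (fun n : ℕ => f n) :=
    hanti_pos.summable_of_integrableOn_Ioi hf.integrableOn fun x _ => hnonneg x
  have hsum_neg : Summable (fun n : ℕ => f (-n)) :=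
    hanti_neg.summable_of_integrableOn_Ioi_zero hf.comp_neg.integrableOn fun x _ => hnonneg _
  have htail_pos : ∑' n : ℕ, f (n + 1 + 1 : ℕ) ≤ ∫ x in Ioi 1, f x := by
    simpa using hanti_pos.tsum_comp_add_le_integral 1 hf.integrableOn fun x _ => hnonneg x
  have htail_neg : ∑' n : ℕ, f (-(n + 1 : ℕ)) ≤ ∫ x in Iic 0, f x := by
    simpa using hanti_neg.tsum_add_one_le_integral hf.comp_neg.integrableOn fun x _ => hnonneg _
  have hmid := add_le_apply_add_intervalIntegral_of_unimodal ht (hmono.mono Icc_subset_Iic_self)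
    (hanti.mono Icc_subset_Ici_self) hf.intervalIntegrable
  have hsplit : (∫ x in Iic 0, f x) + (∫ x in (0 : ℝ)..1, f x) + ∫ x in Ioi 1, f x = ∫ x, f x := by
    rw [← integral_Iic_sub_Iic hf.integrableOn hf.integrableOn, add_sub_cancel,
      integral_Iic_add_Ioi hf.integrableOn hf.integrableOn]
  have hsum_nat : Summable (fun n : ℕ => f ((n : ℤ) : ℝ)) := by simpa using hsum_pos
  have hsum_neg_nat : Summable (fun n : ℕ => f ((-(n + 1) : ℤ) : ℝ)) := by
    simpa using (summable_nat_add_iff 1).2 hsum_neg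
  refine ⟨.of_nat_of_neg_add_one hsum_nat hsum_neg_nat, ?_⟩
  rw [tsum_of_nat_of_neg_add_one (f := fun n : ℤ => f n) hsum_nat hsum_neg_nat]
  push_cast
  rw [hsum_pos.tsum_eq_zero_add, ((summable_nat_add_iff 1).2 hsum_pos).tsum_eq_zero_add]
  push_cast at htail_pos htail_neg ⊢
  linarith

theorem summable_and_tsum_int_le_of_unimodal {μ : ℝ}
    (hmono : MonotoneOn f (Iic μ)) (hanti : AntitoneOn f (Ici μ))
    (hnonneg : ∀ x, 0 ≤ f x) (hf : Integrable f) :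
    Summable (fun n : ℤ => f n) ∧ ∑' n : ℤ, f n ≤ f μ + ∫ x, f x := by
  set m := ⌊μ⌋
  have ht : μ - m ∈ Icc (0 : ℝ) 1 :=
    ⟨sub_nonneg.2 (Int.floor_le μ), by linarith [Int.lt_floor_add_one μ]⟩
  obtain ⟨hsum, hle⟩ :=
    summable_and_tsum_int_le_of_unimodal_of_mem_Icc (f := fun x => f (x + m)) ht
    (fun x hx y hy hxy => hmono (by rw [mem_Iic] at hx ⊢; linarith)
      (by rw [mem_Iic] at hy ⊢; linarith) (by linarith))
    (fun x hx y hy hxy => hanti (by rw [mem_Ici] at hx ⊢; linarith)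
      (by rw [mem_Ici] at hy ⊢; linarith) (by linarith))
    (fun x => hnonneg _) (hf.comp_add_right _)
  have hshift : ∀ n : ℤ, f ((Equiv.addRight m n : ℤ) : ℝ) = f (n + m) := fun n => by simp
  rw [integral_add_right_eq_self, sub_add_cancel] at hle
  rw [← (Equiv.addRight m).summable_iff, ← (Equiv.addRight m).tsum_eq]
  simp only [Function.comp_def, hshift]
  exact ⟨hsum, hle⟩

end Unimodal

section Gaussian

variable {c : ℝ}

lemma monotoneOn_exp_neg_mul_sub_sq (hc : 0 ≤ c) (μ : ℝ) :
    MonotoneOn (fun x => Real.exp (-c * (x - μ) ^ 2)) (Iic μ) := fun x hx y hy hxy => by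
  simp only [mem_Iic] at hx hy
  exact Real.exp_le_exp.2 (by nlinarith [mul_nonneg hc (mul_nonneg (sub_nonneg.2 hxy)
    (by linarith : 0 ≤ 2 * μ - x - y))])

lemma antitoneOn_exp_neg_mul_sub_sq (hc : 0 ≤ c) (μ : ℝ) :
    AntitoneOn (fun x => Real.exp (-c * (x - μ) ^ 2)) (Ici μ) := fun x hx y hy hxy => by
  simp only [mem_Ici] at hx hy
  exact Real.exp_le_exp.2 (by nlinarith [mul_nonneg hc (mul_nonneg (sub_nonneg.2 hxy)
    (by linarith : 0 ≤ x + y - 2 * μ))])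

theorem summable_and_tsum_int_exp_neg_mul_sub_sq_le (hc : 0 < c) (μ : ℝ) :
    Summable (fun n : ℤ => Real.exp (-c * (n - μ) ^ 2)) ∧
      ∑' n : ℤ, Real.exp (-c * (n - μ) ^ 2) ≤ 1 + Real.sqrt (Real.pi / c) := by
  have := summable_and_tsum_int_le_of_unimodal (monotoneOn_exp_neg_mul_sub_sq hc.le μ)
    (antitoneOn_exp_neg_mul_sub_sq hc.le μ) (fun x => (Real.exp_pos _).le)
    ((integrable_exp_neg_mul_sq hc).comp_sub_right μ)
  rwa [integral_sub_right_eq_self (fun x => Real.exp (-c * x ^ 2)), integral_gaussian, sub_self,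
    zero_pow two_ne_zero, mul_zero, Real.exp_zero] at this

end Gaussian

lemma neg_sq_div_sub_sq_div_eq {a b : ℝ} (ha : a ≠ 0) (hb : b ≠ 0) (hab : a + b ≠ 0) (V u : ℝ) :
    -u ^ 2 / (2 * a) - (V - u) ^ 2 / (2 * b) =
      -V ^ 2 / (2 * (a + b)) + -((a + b) / (2 * a * b)) * (u - a * V / (a + b)) ^ 2 := by
  field_simp
  ring

theorem gaussian_convolution_sum_bound (a b V : ℝ) (ha : 0 < a) (hb : 0 < b) :
    Summable (fun u : ℤ =>
      Real.exp (-(u : ℝ) ^ 2 / (2 * a) - (V - (u : ℝ)) ^ 2 / (2 * b))) ∧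
    ∑' u : ℤ, Real.exp (-(u : ℝ) ^ 2 / (2 * a) - (V - (u : ℝ)) ^ 2 / (2 * b)) ≤
      (1 + Real.sqrt (2 * Real.pi * a * b / (a + b))) *
        Real.exp (-V ^ 2 / (2 * (a + b))) := by
  have hab : 0 < a + b := by linarith
  obtain ⟨hsum, hle⟩ := summable_and_tsum_int_exp_neg_mul_sub_sq_le
    (by positivity : 0 < (a + b) / (2 * a * b)) (a * V / (a + b))
  have hvar : Real.pi / ((a + b) / (2 * a * b)) = 2 * Real.pi * a * b / (a + b) := by
    field_simp
  simp only [neg_sq_div_sub_sq_div_eq ha.ne' hb.ne' hab.ne' V, Real.exp_add]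
  refine ⟨hsum.mul_left _, ?_⟩
  rw [tsum_mul_left, mul_comm, ← hvar]
  exact mul_le_mul_of_nonneg_right hle (Real.exp_pos _).le
end

section
/- Let δ > 0, m > 0 and T ≥ 0 be real numbers. Then the sum over all pairs of integers (u, v) ∈ ℤ × ℤ with u + v ≤ −T of exp(δ * (u + v) − v²/m) converges and satisfies ∑_{(u,v) ∈ ℤ², u + v ≤ −T} exp(δ*(u + v) − v²/m) ≤ (exp(−δ*T) / (1 − exp(−δ))) * (1 + Real.sqrt (π * m)). -/
/-!
Substituting `s = u + v` factors the summand as `exp (δ s) · exp (-v² / m)`, so the double sum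
is the product of a one-sided geometric series in `s ≤ -T`, at most `exp (-δ T) / (1 - exp (-δ))`,
and a Gaussian lattice sum, which the integral test bounds by `1 + √(π m)`.
-/

open Real Set MeasureTheory

lemma antitoneOn_exp_neg_mul_sq {b : ℝ} (hb : 0 ≤ b) :
    AntitoneOn (fun x : ℝ => exp (-b * x ^ 2)) (Ici 0) := by
  intro x hx y _ hxy
  have : x ^ 2 ≤ y ^ 2 := pow_le_pow_left₀ hx hxy 2
  exact exp_le_exp.2 (by nlinarith)

section Gaussian

variable {b : ℝ}

lemma summable_nat_exp_neg_mul_sq (hb : 0 < b) : Summable fun n : ℕ => exp (-b * (n : ℝ) ^ 2) :=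
  (antitoneOn_exp_neg_mul_sq hb.le).summable_of_integrableOn_Ioi_zero
    (integrable_exp_neg_mul_sq hb).integrableOn fun _ _ => (exp_pos _).le

lemma tsum_nat_exp_neg_mul_sq_le (hb : 0 < b) : ∑' n : ℕ, exp (-b * (n : ℝ) ^ 2) ≤ 1 + √(π / b) / 2 := by
  have h := (antitoneOn_exp_neg_mul_sq hb.le).tsum_le_integral
    (integrable_exp_neg_mul_sq hb).integrableOn fun _ _ => (exp_pos _).le
  rw [integral_gaussian_Ioi] at h
  simpa using h

lemma summable_int_exp_neg_mul_sq (hb : 0 < b) :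
    Summable fun n : ℤ => exp (-b * (n : ℝ) ^ 2) :=
  .of_nat_of_neg (by simpa using summable_nat_exp_neg_mul_sq hb)
    (by simpa using summable_nat_exp_neg_mul_sq hb)

lemma tsum_int_exp_neg_mul_sq_le (hb : 0 < b) :
    ∑' n : ℤ, exp (-b * (n : ℝ) ^ 2) ≤ 1 + √(π / b) := by
  have hnat := summable_nat_exp_neg_mul_sq hb
  rw [Summable.tsum_of_nat_of_neg (by simpa using hnat) (by simpa using hnat)]
  simp only [Int.cast_natCast, Int.cast_neg, neg_sq, Int.cast_zero, zero_pow two_ne_zero,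
    mul_zero, exp_zero]
  linarith [tsum_nat_exp_neg_mul_sq_le hb]

end Gaussian

lemma intCast_le_neg_iff_le_neg_ceil (s : ℤ) (T : ℝ) : (s : ℝ) ≤ -T ↔ s ≤ -⌈T⌉ := by
  rw [le_neg, le_neg (a := s), Int.ceil_le, Int.cast_neg]

lemma hasSum_exp_mul_ite_le_neg {δ : ℝ} (hδ : 0 < δ) (T : ℝ) :
    HasSum (fun s : ℤ => if (s : ℝ) ≤ -T then exp (δ * s) else 0)
      (exp (-δ * ⌈T⌉) / (1 - exp (-δ))) := by
  set N := ⌈T⌉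
  have hinj : Function.Injective fun n : ℕ => -N - n := fun a b hab => by simpa using hab
  rw [← hinj.hasSum_iff]
  · have hterm (n : ℕ) : (if ((-N - n : ℤ) : ℝ) ≤ -T then exp (δ * ((-N - n : ℤ) : ℝ)) else 0)
        = exp (-δ * N) * exp (-δ) ^ n := by
      rw [if_pos ((intCast_le_neg_iff_le_neg_ceil _ T).2 (by omega)), ← exp_nat_mul,
        ← exp_add]
      push_cast
      ring_nf
    simp only [Function.comp_def, hterm, div_eq_mul_inv]
    exact (hasSum_geometric_of_lt_one (exp_pos _).le (exp_lt_one_iff.2 (by linarith))).mul_left _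
  · intro s hs
    refine if_neg fun hsT => hs ⟨(-N - s).toNat, ?_⟩
    have := (intCast_le_neg_iff_le_neg_ceil s T).1 hsT
    simp only
    omega

lemma hasSum_mul_comp_add {G : Type*} [AddGroup G] {g h : G → ℝ} {a b : ℝ}
    (hg : HasSum g a) (hh : HasSum h b) (hg0 : 0 ≤ g) (hh0 : 0 ≤ h) :
    HasSum (fun p : G × G => g (p.1 + p.2) * h p.2) (a * b) := by
  let shear : G × G ≃ G × G :=
    { toFun p := (p.1 + p.2, p.2)
      invFun q := (q.1 - q.2, q.2)
      left_inv p := by simp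
      right_inv q := by simp }
  exact shear.hasSum_iff.2 <|
    hg.mul hh (hg.summable.mul_of_nonneg hh.summable hg0 hh0)

theorem gaussian_barrier_sum_bound_general (δ m T : ℝ) (hδ : 0 < δ) (hm : 0 < m) :
    Summable (fun p : ℤ × ℤ =>
      if (p.1 : ℝ) + (p.2 : ℝ) ≤ -T then
        Real.exp (δ * ((p.1 : ℝ) + (p.2 : ℝ)) - (p.2 : ℝ) ^ 2 / m) else 0) ∧
    ∑' p : ℤ × ℤ,
      (if (p.1 : ℝ) + (p.2 : ℝ) ≤ -T then
        Real.exp (δ * ((p.1 : ℝ) + (p.2 : ℝ)) - (p.2 : ℝ) ^ 2 / m) else 0) ≤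
      Real.exp (-δ * T) / (1 - Real.exp (-δ)) * (1 + Real.sqrt (Real.pi * m)) := by
  set g : ℤ → ℝ := fun s => if (s : ℝ) ≤ -T then exp (δ * s) else 0
  set h : ℤ → ℝ := fun v => exp (-m⁻¹ * (v : ℝ) ^ 2)
  have hfactor : (fun p : ℤ × ℤ => if (p.1 : ℝ) + (p.2 : ℝ) ≤ -T then
      exp (δ * ((p.1 : ℝ) + (p.2 : ℝ)) - (p.2 : ℝ) ^ 2 / m) else 0) =
      fun p => g (p.1 + p.2) * h p.2 := by
    funext p
    simp only [g, h, Int.cast_add]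
    split_ifs
    · rw [← exp_add]; ring_nf
    · rw [zero_mul]
  have hg0 : 0 ≤ g := fun s => by dsimp only [g]; split_ifs <;> positivity
  have hδ1 : exp (-δ) < 1 := exp_lt_one_iff.2 (neg_neg_of_pos hδ)
  have hsum := hasSum_mul_comp_add (hasSum_exp_mul_ite_le_neg hδ T)
    (summable_int_exp_neg_mul_sq (inv_pos.2 hm)).hasSum hg0 fun _ => (exp_pos _).le
  rw [hfactor, hsum.tsum_eq]
  refine ⟨hsum.summable, mul_le_mul ?_ ?_ (tsum_nonneg fun _ => (exp_pos _).le) ?_⟩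
  · exact div_le_div_of_nonneg_right
      (exp_le_exp.2 (mul_le_mul_of_nonpos_left (Int.le_ceil T) (by linarith))) (by linarith)
  · simpa [div_inv_eq_mul] using tsum_int_exp_neg_mul_sq_le (inv_pos.2 hm)
  · exact div_nonneg (exp_pos _).le (by linarith)

theorem gaussian_barrier_sum_bound (δ m T : ℝ) (hδ : 0 < δ) (hm : 0 < m) (hT : 0 ≤ T) :
    Summable (fun p : ℤ × ℤ =>
      if (p.1 : ℝ) + (p.2 : ℝ) ≤ -T then
        Real.exp (δ * ((p.1 : ℝ) + (p.2 : ℝ)) - (p.2 : ℝ) ^ 2 / m) else 0) ∧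
    ∑' p : ℤ × ℤ,
      (if (p.1 : ℝ) + (p.2 : ℝ) ≤ -T then
        Real.exp (δ * ((p.1 : ℝ) + (p.2 : ℝ)) - (p.2 : ℝ) ^ 2 / m) else 0) ≤
      Real.exp (-δ * T) / (1 - Real.exp (-δ)) * (1 + Real.sqrt (Real.pi * m)) :=
  gaussian_barrier_sum_bound_general δ m T hδ hm
end

section
/- Let X ≥ 2 be a real number, let q be a squarefree positive integer all of whose prime factors are at most X, and let γ be a real-valued function on the positive integers with finite support. Let W be the set of positive integers w all of whose prime factors are at most X and such that w * q is a perfect square. Then ∑_{w₁ ∈ W} ∑_{w₂ ∈ W} γ(w₁) * γ(w₂) / Real.sqrt (w₁ * w₂) * ∏_{p prime, p ∣ w₁ * w₂} (1 − 1/p) ≥ 0, where the sums range over the (finitely many) elements of W in the support of γ. -/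
/-!
Writing `P(n) = ∏_{p ∣ n} (1 - 1/p)`, one has `P(mn) = P(m) P(n) ∏_{p ∣ (m,n)} (1 + 1/(p - 1))`,
so with `c_n = γ(n) P(n) / √n` the form is `∑_{m,n} c_m c_n ∏_{p ∣ (m,n)} (1 + k_p)` with
`k_p = 1/(p - 1) ≥ 0`. Expanding the product over sets `T` of common prime factors turns it into
`∑_T (∏_{p ∈ T} k_p) (∑_{n : ∏ T ∣ n} c_n)²`, a nonnegative combination of squares.
-/

open Finset

theorem sum_sum_mul_prod_inter_one_add_nonneg {ι α : Type*} [DecidableEq α] (s : Finset ι)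
    (A : ι → Finset α) (k : α → ℝ) (hk : ∀ i ∈ s, ∀ a ∈ A i, 0 ≤ k a) (x : ι → ℝ) :
    0 ≤ ∑ i ∈ s, ∑ j ∈ s, x i * x j * ∏ a ∈ A i ∩ A j, (1 + k a) := by
  set U := s.biUnion A
  have expand : ∀ i ∈ s, ∀ j ∈ s, ∏ a ∈ A i ∩ A j, (1 + k a) =
      ∑ T ∈ U.powerset, if T ⊆ A i ∧ T ⊆ A j then ∏ a ∈ T, k a else 0 := by
    intro i hi j _
    rw [prod_one_add, ← sum_filter]
    congr 1
    ext T
    simp only [mem_powerset, mem_filter, subset_inter_iff, iff_and_self, and_imp]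
    exact fun hTi _ => hTi.trans (subset_biUnion_of_mem A hi)
  have square (T : Finset α) :
      ∑ i ∈ s, ∑ j ∈ s, x i * x j * (if T ⊆ A i ∧ T ⊆ A j then ∏ a ∈ T, k a else 0) =
        (∏ a ∈ T, k a) * (∑ i ∈ s with T ⊆ A i, x i) ^ 2 := by
    rw [sum_filter, sq, sum_mul_sum, mul_sum]
    refine sum_congr rfl fun i _ => ?_
    rw [mul_sum]
    refine sum_congr rfl fun j _ => ?_
    split_ifs <;> simp_all only [and_self, not_true_eq_false, and_false, false_and] <;> ring
  calc 0 ≤ ∑ T ∈ U.powerset, (∏ a ∈ T, k a) * (∑ i ∈ s with T ⊆ A i, x i) ^ 2 := by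
        refine sum_nonneg fun T hT => mul_nonneg (prod_nonneg fun a ha => ?_) (sq_nonneg _)
        obtain ⟨i, hi, hai⟩ := mem_biUnion.mp (mem_powerset.mp hT ha)
        exact hk i hi a hai
    _ = ∑ i ∈ s, ∑ j ∈ s, x i * x j * ∏ a ∈ A i ∩ A j, (1 + k a) := by
        rw [sum_congr rfl fun i hi => sum_congr rfl fun j hj => by rw [expand i hi j hj, mul_sum]]
        rw [sum_congr rfl fun i _ => sum_comm, sum_comm]
        exact sum_congr rfl fun T _ => (square T).symm

theorem one_sub_one_div_mul_one_add_one_div_sub_one {p : ℝ} (hp : 1 < p) :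
    (1 - 1 / p) * (1 + 1 / (p - 1)) = 1 := by
  have : p - 1 ≠ 0 := by linarith
  field_simp
  ring

theorem Nat.prod_primeFactors_mul_one_sub_one_div (m n : ℕ) :
    ∏ p ∈ (m * n).primeFactors, (1 - 1 / (p : ℝ)) =
      (∏ p ∈ m.primeFactors, (1 - 1 / (p : ℝ))) * (∏ p ∈ n.primeFactors, (1 - 1 / (p : ℝ))) *
        ∏ p ∈ (m.gcd n).primeFactors, (1 + 1 / ((p : ℝ) - 1)) := by
  have hgcd : (∏ p ∈ (m.gcd n).primeFactors, (1 - 1 / (p : ℝ))) *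
      ∏ p ∈ (m.gcd n).primeFactors, (1 + 1 / ((p : ℝ) - 1)) = 1 := by
    rw [← prod_mul_distrib]
    refine prod_eq_one fun p hp => one_sub_one_div_mul_one_add_one_div_sub_one ?_
    exact_mod_cast (Nat.prime_of_mem_primeFactors hp).one_lt
  linear_combination (∏ p ∈ (m.gcd n).primeFactors, (1 + 1 / ((p : ℝ) - 1))) *
      Nat.prod_primeFactors_gcd_mul_prod_primeFactors_mul m n (fun p => 1 - 1 / (p : ℝ)) -
    (∏ p ∈ (m * n).primeFactors, (1 - 1 / (p : ℝ))) * hgcd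

theorem mul_div_sqrt_mul_prod_primeFactors_eq (x : ℕ → ℝ) (m n : ℕ) :
    x m * x n / √((m : ℝ) * n) * ∏ p ∈ (m * n).primeFactors, (1 - 1 / (p : ℝ)) =
      (x m / √(m : ℝ) * ∏ p ∈ m.primeFactors, (1 - 1 / (p : ℝ))) *
        (x n / √(n : ℝ) * ∏ p ∈ n.primeFactors, (1 - 1 / (p : ℝ))) *
          ∏ p ∈ (m.gcd n).primeFactors, (1 + 1 / ((p : ℝ) - 1)) := by
  rw [Real.sqrt_mul m.cast_nonneg, Nat.prod_primeFactors_mul_one_sub_one_div, ← div_mul_div_comm]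
  ring

theorem sum_sum_mul_div_sqrt_mul_prod_primeFactors_nonneg (S : Finset ℕ) (hS : ∀ n ∈ S, n ≠ 0)
    (x : ℕ → ℝ) :
    0 ≤ ∑ m ∈ S, ∑ n ∈ S,
      x m * x n / √((m : ℝ) * n) * ∏ p ∈ (m * n).primeFactors, (1 - 1 / (p : ℝ)) := by
  simp_rw [mul_div_sqrt_mul_prod_primeFactors_eq]
  rw [sum_congr rfl fun m hm => sum_congr rfl fun n hn => by
    rw [Nat.primeFactors_gcd (hS m hm) (hS n hn)]]
  refine sum_sum_mul_prod_inter_one_add_nonneg S _ _ (fun n _ p hp => ?_) _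
  have : (1 : ℝ) < p := by exact_mod_cast (Nat.prime_of_mem_primeFactors hp).one_lt
  exact one_div_nonneg.mpr (sub_nonneg.mpr this.le)

open Classical in
theorem diagonal_twisted_form_nonneg_general (X : ℝ) (q : ℕ) (γ : ℕ →₀ ℝ) :
    0 ≤ ∑ w₁ ∈ γ.support.filter
          (fun w => 0 < w ∧ (∀ p : ℕ, p.Prime → p ∣ w → (p : ℝ) ≤ X) ∧ IsSquare (w * q)),
        ∑ w₂ ∈ γ.support.filter
          (fun w => 0 < w ∧ (∀ p : ℕ, p.Prime → p ∣ w → (p : ℝ) ≤ X) ∧ IsSquare (w * q)),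
          γ w₁ * γ w₂ / Real.sqrt ((w₁ : ℝ) * (w₂ : ℝ)) *
            ∏ p ∈ (w₁ * w₂).primeFactors, (1 - 1 / (p : ℝ)) :=
  sum_sum_mul_div_sqrt_mul_prod_primeFactors_nonneg _
    (fun _ hw => (mem_filter.mp hw).2.1.ne') γ

open Classical in
theorem diagonal_twisted_form_nonneg (X : ℝ) (hX : 2 ≤ X) (q : ℕ) (hq0 : 0 < q)
    (hsf : Squarefree q) (hqX : ∀ p : ℕ, p.Prime → p ∣ q → (p : ℝ) ≤ X)
    (γ : ℕ →₀ ℝ) :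
    0 ≤ ∑ w₁ ∈ γ.support.filter
          (fun w => 0 < w ∧ (∀ p : ℕ, p.Prime → p ∣ w → (p : ℝ) ≤ X) ∧ IsSquare (w * q)),
        ∑ w₂ ∈ γ.support.filter
          (fun w => 0 < w ∧ (∀ p : ℕ, p.Prime → p ∣ w → (p : ℝ) ≤ X) ∧ IsSquare (w * q)),
          γ w₁ * γ w₂ / Real.sqrt ((w₁ : ℝ) * (w₂ : ℝ)) *
            ∏ p ∈ (w₁ * w₂).primeFactors, (1 - 1 / (p : ℝ)) :=
  diagonal_twisted_form_nonneg_general X q γ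
end
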